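/- arXiv:1203.2740 — 5 statements merged into one kernel-verified Lean document; each statement's English description precedes it below -/
import Mathlib

section
/- Let G be a connected multigraph with n vertices q₁, ..., q_n of degrees d₁, ..., d_n. Then the number of spanning trees of G satisfies τ(G) ≤ d₁ · d₂ ⋯ d_{n-1} (the product of the degrees of any n−1 of the vertices). -/
/-!
Root every spanning tree `H` at `v₀` and send each vertex `v ≠ v₀` to its parent, the neighbour
one step closer to `v₀`. The edges `s(v, parent v)` are exactly the `n - 1` edges of `H`, so `H`
is determined by its parent map and its weight is `∏_{v ≠ v₀} m v (parent v)`. Summing the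
latter over *all* maps `{v ≠ v₀} → V` instead gives `∏_{v ≠ v₀} ∑_w m v w`.
-/

open Finset

namespace SimpleGraph

variable {V : Type*} {G : SimpleGraph V}

lemma Reachable.exists_adj_dist_add_one_eq {v r : V} (hr : G.Reachable v r) (hv : v ≠ r) :
    ∃ w, G.Adj v w ∧ G.dist w r + 1 = G.dist v r := by
  obtain ⟨p, hp⟩ := hr.exists_walk_length_eq_dist
  have hnil : ¬p.Nil := Walk.not_nil_of_ne hv
  have hadj := p.adj_snd hnil
  refine ⟨p.snd, hadj, le_antisymm ?_ ?_⟩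
  · have := dist_le p.tail
    have := p.length_tail_add_one hnil
    omega
  · have := hadj.reachable.dist_triangle_left r
    rwa [dist_eq_one_iff_adj.mpr hadj, add_comm] at this

open scoped Classical in
/-- The parent of `v` in a breadth-first search tree of `G` rooted at `r`; junk value `v` when
`v = r` or `r` is unreachable from `v`. -/
noncomputable def parentToward (G : SimpleGraph V) (r v : V) : V :=
  if h : ∃ w, G.Adj v w ∧ G.dist w r + 1 = G.dist v r then h.choose else v

lemma Reachable.parentToward_spec {v r : V} (hr : G.Reachable v r) (hv : v ≠ r) :
    G.Adj v (G.parentToward r v) ∧ G.dist (G.parentToward r v) r + 1 = G.dist v r := by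
  have h := hr.exists_adj_dist_add_one_eq hv
  rw [parentToward, dif_pos h]
  exact h.choose_spec

lemma Preconnected.injOn_parentEdge (hG : G.Preconnected) (r : V) :
    Set.InjOn (fun v => s(v, G.parentToward r v)) {r}ᶜ := by
  intro a ha b hb hab
  have hpa := ((hG a r).parentToward_spec ha).2
  have hpb := ((hG b r).parentToward_spec hb).2
  rcases Sym2.eq_iff.mp hab with ⟨h, -⟩ | ⟨hab, hba⟩
  · exact h
  · rw [← hab] at hpb
    rw [hba] at hpa
    omega

variable [Fintype V] [DecidableEq V]

lemma IsTree.image_parentEdge [Fintype G.edgeSet] (hG : G.IsTree) (r : V) :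
    (univ.erase r).image (fun v => s(v, G.parentToward r v)) = G.edgeFinset := by
  have hinj : Set.InjOn (fun v => s(v, G.parentToward r v)) (univ.erase r : Finset V) := by
    simpa [Set.compl_eq_univ_sdiff] using hG.connected.preconnected.injOn_parentEdge r
  apply eq_of_subset_of_card_le
  · simp only [subset_iff, mem_image, mem_erase, mem_univ, and_true, mem_edgeFinset,
      forall_exists_index, and_imp]
    rintro _ v hv rfl
    exact ((hG.connected.preconnected v r).parentToward_spec hv).1
  · have := hG.card_edgeFinset
    rw [card_image_of_injOn hinj, card_erase_of_mem (mem_univ r), card_univ]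
    omega

lemma IsTree.prod_edgeFinset_eq_prod_parentEdge {M : Type*} [CommMonoid M] [Fintype G.edgeSet]
    (hG : G.IsTree) (r : V) (f : Sym2 V → M) :
    ∏ e ∈ G.edgeFinset, f e = ∏ v ∈ univ.erase r, f s(v, G.parentToward r v) := by
  rw [← hG.image_parentEdge r, prod_image]
  simpa [Set.compl_eq_univ_sdiff] using hG.connected.preconnected.injOn_parentEdge r

lemma IsTree.eq_of_parentToward_eq {H : SimpleGraph V} (hG : G.IsTree) (hH : H.IsTree) {r : V}
    (h : ∀ v ≠ r, G.parentToward r v = H.parentToward r v) : G = H := by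
  classical
  rw [← edgeFinset_inj, ← hG.image_parentEdge r, ← hH.image_parentEdge r]
  exact image_congr fun v hv => by rw [h v (by simpa using hv)]

theorem sum_isTree_prod_edgeFinset_le [DecidablePred (IsTree : SimpleGraph V → Prop)]
    [∀ H : SimpleGraph V, DecidableRel H.Adj] {R : Type*} [CommSemiring R] [PartialOrder R]
    [CanonicallyOrderedAdd R] (w : Sym2 V → R) (r : V) :
    ∑ H : SimpleGraph V with H.IsTree, ∏ e ∈ H.edgeFinset, w e ≤
      ∏ v ∈ univ.erase r, ∑ u, w s(v, u) := by
  set nonRoot := univ.erase r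
  let parentMap : SimpleGraph V → (nonRoot → V) := fun H v => H.parentToward r v
  set trees : Finset (SimpleGraph V) := {H | H.IsTree}
  have hinj : Set.InjOn parentMap trees := fun G hG H hH h =>
    (mem_filter.mp hG).2.eq_of_parentToward_eq (mem_filter.mp hH).2 fun v hv =>
      congrFun h ⟨v, by simpa [nonRoot] using hv⟩
  calc ∑ H : SimpleGraph V with H.IsTree, ∏ e ∈ H.edgeFinset, w e
      = ∑ H ∈ trees, ∏ v : nonRoot, w s(v, parentMap H v) :=
        sum_congr rfl fun H hH => by
          rw [(mem_filter.mp hH).2.prod_edgeFinset_eq_prod_parentEdge r, ← prod_coe_sort]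
    _ = ∑ g ∈ image parentMap trees, ∏ v : nonRoot, w s(v, g v) :=
        (sum_image (f := fun g : nonRoot → V => ∏ v : nonRoot, w s(v, g v)) hinj).symm
    _ ≤ ∑ g : nonRoot → V, ∏ v : nonRoot, w s(v, g v) := sum_le_sum_of_subset (subset_univ _)
    _ = ∏ v : nonRoot, ∑ u, w s(v, u) :=
        (Fintype.prod_sum fun (v : nonRoot) (u : V) => w s(v, u)).symm
    _ = ∏ v ∈ nonRoot, ∑ u, w s(v, u) := prod_coe_sort nonRoot fun v => ∑ u, w s(v, u)

end SimpleGraph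

open scoped Classical in
theorem stmt4_general (n : ℕ) (m : Fin n → Fin n → ℕ)
    (hsym : ∀ v w, m v w = m w v) (v₀ : Fin n) :
    ∑ H ∈ Finset.univ.filter (fun H : SimpleGraph (Fin n) => H.IsTree),
        ∏ e ∈ H.edgeFinset, Sym2.lift ⟨m, hsym⟩ e ≤
      ∏ v ∈ Finset.univ.erase v₀, ∑ w, m v w :=
  SimpleGraph.sum_isTree_prod_edgeFinset_le (Sym2.lift ⟨m, hsym⟩) v₀

open scoped Classical in
/-- For a connected multigraph on `n` vertices, given by a symmetric edge-multiplicity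
function `m` without loops, the number of spanning trees (each simple spanning tree
weighted by the product of the multiplicities of its edges) is at most the product of
the degrees of any `n - 1` of the vertices. -/
theorem stmt4 (n : ℕ) (hn : 1 ≤ n) (m : Fin n → Fin n → ℕ)
    (hsym : ∀ v w, m v w = m w v) (hloop : ∀ v, m v v = 0)
    (hconn : (SimpleGraph.fromRel fun v w => 0 < m v w).Connected) (v₀ : Fin n) :
    ∑ H ∈ Finset.univ.filter (fun H : SimpleGraph (Fin n) => H.IsTree),
        ∏ e ∈ H.edgeFinset, Sym2.lift ⟨m, hsym⟩ e ≤
      ∏ v ∈ Finset.univ.erase v₀, ∑ w, m v w :=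
  stmt4_general n m hsym v₀
end

section
/- Let k ≥ 2 and s ≥ 1 be integers and l₁, ..., l_s positive integers. Then there exists an index t with 1 ≤ t ≤ s such that (k−1)·∑_{i=1}^s l_i ≤ k·∑_{i=t}^{s} l_i and ∑_{i=1}^s l_i ≤ k·∑_{i=1}^{t} l_i. -/
/-! Choose `t` minimal with `S ≤ k · (l₁ + ⋯ + l_t)`. By minimality the prefix `l₁ + ⋯ + l_{t-1}`
is less than `S / k`, so the complementary suffix `l_t + ⋯ + l_s` is at least `(k - 1) S / k`. -/

open Finset

theorem Finset.sum_Icc_one_add_sum_Icc_succ {M : Type*} [AddCommMonoid M] (f : ℕ → M)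
    {m s : ℕ} (h : m ≤ s) :
    ∑ i ∈ Icc 1 m, f i + ∑ i ∈ Icc (m + 1) s, f i = ∑ i ∈ Icc 1 s, f i := by
  simpa only [← Icc_add_one_left_eq_Ioc, zero_add] using
    sum_Ioc_consecutive f (Nat.zero_le m) h

theorem Nat.sub_one_mul_le_mul_of_add_eq {a b c k : ℕ} (habc : a + b = c) (h : k * a ≤ c) :
    (k - 1) * c ≤ k * b := by
  have hkc : k * c = k * a + k * b := by rw [← habc, Nat.mul_add]
  rw [Nat.sub_one_mul]
  omega

theorem stmt5_general (k s : ℕ) (hk : 2 ≤ k) (hs : 1 ≤ s) (l : ℕ → ℕ) :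
    ∃ t ∈ Finset.Icc 1 s,
      (k - 1) * ∑ i ∈ Finset.Icc 1 s, l i ≤ k * ∑ i ∈ Finset.Icc t s, l i ∧
      ∑ i ∈ Finset.Icc 1 s, l i ≤ k * ∑ i ∈ Finset.Icc 1 t, l i := by
  set S := ∑ i ∈ Icc 1 s, l i
  have hfull : S ≤ k * S := Nat.le_mul_of_pos_left S (by omega)
  have hP : ∃ t, S ≤ k * ∑ i ∈ Icc 1 t, l i := ⟨s, hfull⟩
  rcases ht : Nat.find hP with _ | m
  · have hS : S = 0 := by simpa [ht] using Nat.find_spec hP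
    exact ⟨1, by simp [hs], by simp [hS], by simp [hS]⟩
  · have hprefix : S ≤ k * ∑ i ∈ Icc 1 (m + 1), l i := ht ▸ Nat.find_spec hP
    have hms : m + 1 ≤ s := ht ▸ Nat.find_min' hP hfull
    have hshort : ¬S ≤ k * ∑ i ∈ Icc 1 m, l i := Nat.find_min hP (by omega)
    exact ⟨m + 1, mem_Icc.2 ⟨by omega, hms⟩,
      Nat.sub_one_mul_le_mul_of_add_eq (sum_Icc_one_add_sum_Icc_succ l (by omega))
        (le_of_not_ge hshort), hprefix⟩

/-- For `k ≥ 2`, `s ≥ 1` and positive integers `l₁, …, l_s`, there is an index `t`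
with `1 ≤ t ≤ s` such that `(k-1)·∑_{i=1}^s l_i ≤ k·∑_{i=t}^s l_i` and
`∑_{i=1}^s l_i ≤ k·∑_{i=1}^t l_i`. -/
theorem stmt5 (k s : ℕ) (hk : 2 ≤ k) (hs : 1 ≤ s) (l : ℕ → ℕ)
    (hl : ∀ i ∈ Finset.Icc 1 s, 0 < l i) :
    ∃ t ∈ Finset.Icc 1 s,
      (k - 1) * ∑ i ∈ Finset.Icc 1 s, l i ≤ k * ∑ i ∈ Finset.Icc t s, l i ∧
      ∑ i ∈ Finset.Icc 1 s, l i ≤ k * ∑ i ∈ Finset.Icc 1 t, l i :=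
  stmt5_general k s hk hs l
end

section
/- Let k ≥ 1 and let y(x) be the formal power series satisfying y(x) = x·exp(y(x)^k / k!). Then the coefficient of x^t in y(x) equals (1/t)·(t/k!)^{(t-1)/k} / ((t-1)/k)! if k divides t−1, and 0 otherwise. In particular, the coefficient of x^{ka+1} equals (1/((ka+1)·a!))·((ka+1)/k!)^a. -/
/-!
Write `Φ_c = exp (c y^k / k!)`. The functional equation says `y = X Φ_1`, and `Φ_1^n = Φ_n`, so
`[x^(n+s)] y^n = [x^s] Φ_n = ∑_j n^j / (j! k!^j) [x^s] y^(kj)`. For `n ≥ 1` the right-hand side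
only involves coefficients of degree `s < n + s`, so strong induction on the degree pins down every
`[x^t] y^n`. The closed form `[x^(n+km)] y^n = n (n+km)^(m-1) / (m! k!^m)` satisfies the same
recursion because of the binomial-type identity `∑_j C(m,j) n^j A_(m-j)(kj) = A_m(n)` for the
Abel polynomials `A_m(x) = x (x + km)^(m-1)`, which reduces to `j C(m,j) = m C(m-1,j-1)` and the
binomial theorem.
-/

open Finset PowerSeries Nat

/-- The Abel polynomial `p_m(x; -a)`. -/
def abelPoly {R : Type*} [CommRing R] (a : ℕ) (x : R) (m : ℕ) : R :=
  if m = 0 then 1 else x * (x + a * m) ^ (m - 1)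

theorem sum_choose_mul_pow_mul_abelPoly {R : Type*} [CommRing R] (a : ℕ) (x : R) (m : ℕ) :
    ∑ j ∈ range (m + 1), (m.choose j : R) * x ^ j * abelPoly a ((a * j : ℕ) : R) (m - j) =
      abelPoly a x m := by
  rcases m with _ | m
  · simp [abelPoly]
  have hterm : ∀ i ∈ range (m + 1), ((m + 1).choose (i + 1) : R) * x ^ (i + 1) *
      abelPoly a ((a * (i + 1) : ℕ) : R) (m + 1 - (i + 1)) =
        x * (x ^ i * (a * (m + 1) : R) ^ (m - i) * m.choose i) := by
    intro i hi
    obtain ⟨d, rfl⟩ := Nat.exists_eq_add_of_le (Nat.lt_succ_iff.mp (mem_range.mp hi))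
    rcases d with _ | d
    · simp only [add_zero, choose_self, cast_one, one_mul, abelPoly, tsub_self, ↓reduceIte,
        mul_one, pow_zero]
      ring
    · have hchoose : ((i + (d + 1) + 1).choose (i + 1) : R) * (i + 1) =
          (i + (d + 1) + 1) * (i + (d + 1)).choose i := by
        simpa using congrArg (Nat.cast (R := R)) (Nat.add_one_mul_choose_eq (i + (d + 1)) i).symm
      simp only [abelPoly, show i + (d + 1) + 1 - (i + 1) = d + 1 by omega,
        show i + (d + 1) - i = d + 1 by omega, if_neg (succ_ne_zero d), add_tsub_cancel_right]
      push_cast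
      linear_combination (x ^ (i + 1) * (a * (i + 1) + a * (d + 1) : R) ^ d * a) * hchoose
  rw [sum_range_succ', sum_congr rfl hterm, ← mul_sum, ← add_pow]
  simp [abelPoly]

theorem abelPoly_eq_mul_pow_div {K : Type*} [Field K] (a : ℕ) (x : K) (m : ℕ)
    (h : x + a * m ≠ 0) : abelPoly a x m = x * (x + a * m) ^ m / (x + a * m) := by
  rcases m with _ | m
  · simp_all [abelPoly]
  · rw [abelPoly, if_neg (succ_ne_zero m), add_tsub_cancel_right, pow_succ]
    field_simp

theorem div_factorial_mul_div_factorial {m j : ℕ} (hj : j ≤ m) (K a b : ℚ) (hK : K ≠ 0) :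
    a / (j ! * K ^ j) * (b / ((m - j) ! * K ^ (m - j))) = m.choose j * a * b / (m ! * K ^ m) := by
  have hfac : (m ! : ℚ) = m.choose j * j ! * (m - j) ! := by
    exact_mod_cast (Nat.choose_mul_factorial_mul_factorial hj).symm
  rw [hfac, ← pow_mul_pow_sub K hj]
  have := Nat.choose_pos hj
  field_simp

/-- The value of `[x^t] y^n`. The guard makes the truncated `t - n` and the division by `k`
exact. -/
def lagrangeCoeff (k n t : ℕ) : ℚ :=
  if n ≤ t ∧ k ∣ t - n then
    abelPoly k (n : ℚ) ((t - n) / k) / (((t - n) / k) ! * k ! ^ ((t - n) / k))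
  else 0

section LagrangeCoeff

variable {k : ℕ}

theorem lagrangeCoeff_add_mul (hk : 0 < k) (n m : ℕ) :
    lagrangeCoeff k n (n + k * m) = abelPoly k (n : ℚ) m / (m ! * k ! ^ m) := by
  simp [lagrangeCoeff, hk.ne']

theorem lagrangeCoeff_of_lt {n t : ℕ} (h : t < n) : lagrangeCoeff k n t = 0 := by
  simp [lagrangeCoeff, not_le.mpr h]

theorem lagrangeCoeff_of_not_dvd {n t : ℕ} (h : ¬ k ∣ t - n) : lagrangeCoeff k n t = 0 := by
  simp [lagrangeCoeff, h]

theorem lagrangeCoeff_zero_left (hk : 0 < k) (t : ℕ) :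
    lagrangeCoeff k 0 t = if t = 0 then 1 else 0 := by
  by_cases hkt : k ∣ t
  · obtain ⟨m, rfl⟩ := hkt
    rcases m with _ | m
    · simp [lagrangeCoeff, abelPoly]
    · have := lagrangeCoeff_add_mul hk 0 (m + 1)
      simp_all [abelPoly, hk.ne']
  · rw [lagrangeCoeff_of_not_dvd (by simpa using hkt), if_neg (by rintro rfl; simp at hkt)]

theorem lagrangeCoeff_one {t : ℕ} (ht : 1 ≤ t) :
    lagrangeCoeff k 1 t = if k ∣ t - 1 then
      (1 / t) * ((t : ℚ) / k !) ^ ((t - 1) / k) / ((t - 1) / k) ! else 0 := by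
  simp only [lagrangeCoeff, ht, true_and, Nat.cast_one]
  split_ifs with hdvd
  swap
  · rfl
  set m := (t - 1) / k
  have htm : (t : ℚ) = 1 + k * m := by
    have : t = 1 + k * m := by rw [Nat.mul_div_cancel' hdvd]; omega
    exact_mod_cast this
  rw [abelPoly_eq_mul_pow_div _ _ _ (by rw [← htm]; positivity), ← htm, div_pow]
  ring

theorem sum_lagrangeCoeff (hk : 0 < k) (n s : ℕ) :
    ∑ j ∈ range (s + 1), (n : ℚ) ^ j / (j ! * k ! ^ j) * lagrangeCoeff k (k * j) s =
      lagrangeCoeff k n (n + s) := by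
  by_cases hks : k ∣ s
  swap
  · rw [lagrangeCoeff_of_not_dvd (by simpa using hks)]
    refine sum_eq_zero fun j _ ↦ ?_
    rcases lt_or_ge s (k * j) with hlt | hle
    · rw [lagrangeCoeff_of_lt hlt, mul_zero]
    · refine mul_eq_zero_of_right _ (lagrangeCoeff_of_not_dvd fun hdvd ↦ hks ?_)
      simpa [Nat.sub_add_cancel hle] using dvd_add hdvd (dvd_mul_right k j)
  obtain ⟨m, rfl⟩ := hks
  have hsub : range (m + 1) ⊆ range (k * m + 1) :=
    range_subset_range.mpr (by simpa using Nat.le_mul_of_pos_left m hk)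
  rw [← sum_subset hsub, lagrangeCoeff_add_mul hk, ← sum_choose_mul_pow_mul_abelPoly, sum_div]
  · refine sum_congr rfl fun j hj ↦ ?_
    have hjm : j ≤ m := by simpa [Nat.lt_succ_iff] using hj
    rw [show k * m = k * j + k * (m - j) by rw [← mul_add, Nat.add_sub_cancel' hjm],
      lagrangeCoeff_add_mul hk, div_factorial_mul_div_factorial hjm _ _ _ (by positivity)]
  · intro j _ hj
    rw [lagrangeCoeff_of_lt (by simp only [mem_range, not_lt] at hj; nlinarith), mul_zero]

end LagrangeCoeff

theorem PowerSeries.coeff_pow_eq_zero_of_lt {R : Type*} [CommRing R] {f : R⟦X⟧}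
    (hf : constantCoeff f = 0) {s n : ℕ} (h : s < n) : coeff s (f ^ n) = 0 :=
  coeff_of_lt_order s ((Nat.cast_lt.mpr h).trans_le (le_order_pow_of_constantCoeff_eq_zero n hf))

theorem PowerSeries.coeff_subst_eq_sum_range {R : Type*} [CommRing R] {b : R⟦X⟧}
    (hb : constantCoeff b = 0) (f : R⟦X⟧) (e : ℕ) :
    coeff e (f.subst b) = ∑ d ∈ range (e + 1), coeff d f * coeff e (b ^ d) := by
  rw [coeff_subst' (HasSubst.of_constantCoeff_zero' hb)]
  refine finsum_eq_sum_of_support_subset _ fun d hd ↦ ?_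
  by_contra hde
  simp only [coe_range, Set.mem_Iio, not_lt] at hde
  exact hd (by simp [coeff_pow_eq_zero_of_lt hb (by omega : e < d)])

noncomputable def expPowDivFactorial (k : ℕ) (c : ℚ) (y : ℚ⟦X⟧) : ℚ⟦X⟧ :=
  (rescale c (exp ℚ)).subst ((k ! : ℚ)⁻¹ • y ^ k)

section ExpPowDivFactorial

variable {k : ℕ} {y : ℚ⟦X⟧}

theorem constantCoeff_inv_factorial_smul_pow (hk : 0 < k) (hy : constantCoeff y = 0) :
    constantCoeff ((k ! : ℚ)⁻¹ • y ^ k) = 0 := by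
  simp [hy, hk.ne']

theorem expPowDivFactorial_one_pow (hk : 0 < k) (hy : constantCoeff y = 0) (n : ℕ) :
    expPowDivFactorial k 1 y ^ n = expPowDivFactorial k n y := by
  rw [expPowDivFactorial, expPowDivFactorial, rescale_one, RingHom.id_apply,
    ← subst_pow (HasSubst.of_constantCoeff_zero' (constantCoeff_inv_factorial_smul_pow hk hy)),
    exp_pow_eq_rescale_exp]

theorem coeff_expPowDivFactorial (hk : 0 < k) (hy : constantCoeff y = 0) (c : ℚ) (s : ℕ) :
    coeff s (expPowDivFactorial k c y) =
      ∑ j ∈ range (s + 1), c ^ j / (j ! * k ! ^ j) * coeff s (y ^ (k * j)) := by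
  rw [expPowDivFactorial, coeff_subst_eq_sum_range (constantCoeff_inv_factorial_smul_pow hk hy)]
  refine sum_congr rfl fun j _ ↦ ?_
  rw [coeff_rescale, coeff_exp, smul_pow, pow_mul, map_smul]
  simp only [Algebra.algebraMap_self, one_div, map_inv₀, map_natCast, inv_pow, smul_eq_mul]
  ring

theorem eq_X_mul_expPowDivFactorial (hk : 0 < k) (hy0 : constantCoeff y = 0)
    (hy : ∀ t : ℕ, coeff t y =
      coeff t (X * ∑ n ∈ range (t + 1), ((n ! * k ! ^ n : ℚ))⁻¹ • y ^ (k * n))) :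
    y = X * expPowDivFactorial k 1 y := by
  ext t
  rcases t with _ | s
  · simp [hy0]
  rw [hy, coeff_succ_X_mul, coeff_succ_X_mul, coeff_expPowDivFactorial hk hy0, map_sum,
    sum_range_succ, map_smul, coeff_pow_eq_zero_of_lt hy0 (by nlinarith : s < k * (s + 1))]
  simp

theorem coeff_pow_eq_lagrangeCoeff (hk : 0 < k) (hy0 : constantCoeff y = 0)
    (hfun : y = X * expPowDivFactorial k 1 y) (t n : ℕ) :
    coeff t (y ^ n) = lagrangeCoeff k n t := by
  induction t using Nat.strong_induction_on generalizing n with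
  | _ t ih =>
  rcases n.eq_zero_or_pos with rfl | hn
  · rw [pow_zero, coeff_one, lagrangeCoeff_zero_left hk]
  rcases lt_or_ge t n with htn | hnt
  · rw [coeff_pow_eq_zero_of_lt hy0 htn, lagrangeCoeff_of_lt htn]
  obtain ⟨s, rfl⟩ := Nat.exists_eq_add_of_le hnt
  rw [hfun, mul_pow, expPowDivFactorial_one_pow hk hy0, add_comm n s, coeff_X_pow_mul,
    coeff_expPowDivFactorial hk hy0, add_comm s n, ← sum_lagrangeCoeff hk]
  refine sum_congr rfl fun j _ ↦ ?_
  rw [ih s (by omega)]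

end ExpPowDivFactorial

open PowerSeries in
/-- Lagrange inversion for `y = x · exp(y^k / k!)`: if `y` is a formal power series over `ℚ`
with zero constant term satisfying the functional equation `y = X · Φ(y)` with
`Φ(u) = exp(u^k/k!) = ∑_{n ≥ 0} (1/n!) (u^k/k!)^n` (expressed coefficientwise, where for the
coefficient of `x^t` only the terms with `n ≤ t` contribute), then
`[x^t] y = (1/t) · (t/k!)^((t-1)/k) / ((t-1)/k)!` when `k ∣ t - 1` (and `0` otherwise);
in particular `[x^(ka+1)] y = (1/((ka+1)·a!)) · ((ka+1)/k!)^a`. -/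
theorem stmt7 (k : ℕ) (hk : 1 ≤ k) (y : PowerSeries ℚ)
    (h0 : constantCoeff (R := ℚ) y = 0)
    (hy : ∀ t : ℕ, coeff (R := ℚ) t y =
      coeff (R := ℚ) t (X * ∑ n ∈ Finset.range (t + 1),
        ((n.factorial * k.factorial ^ n : ℚ))⁻¹ • y ^ (k * n))) :
    (∀ t : ℕ, 1 ≤ t → coeff (R := ℚ) t y =
      if k ∣ t - 1 then
        (1 / t) * ((t : ℚ) / k.factorial) ^ ((t - 1) / k) / ((t - 1) / k).factorial
      else 0) ∧
    ∀ a : ℕ, coeff (R := ℚ) (k * a + 1) y =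
      1 / ((k * a + 1) * a.factorial) * (((k * a + 1 : ℕ) : ℚ) / k.factorial) ^ a := by
  have hcoeff (t : ℕ) : coeff t y = lagrangeCoeff k 1 t := by
    simpa using coeff_pow_eq_lagrangeCoeff hk h0 (eq_X_mul_expPowDivFactorial hk h0 hy) t 1
  refine ⟨fun t ht ↦ (hcoeff t).trans (lagrangeCoeff_one ht), fun a ↦ ?_⟩
  rw [hcoeff, lagrangeCoeff_one (by omega), if_pos (by simp), Nat.add_sub_cancel,
    Nat.mul_div_cancel_left a hk]
  push_cast
  field_simp
end

section
/- For positive integers m, k and a, as a → ∞ one has (1/a)·ln( m^{(k+1)a} · ((ka)!/(ka+1)) · ((ka+1)/k!)^a / (a!·(ka+1)!) ) → (k+1)·ln(m) + 1 − ln((k−1)!). -/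
/-! After cancelling `(k a + 1)! = (k a + 1) · (k a)!`, the quantity is
`m^((k+1)a) · (k a + 1)^(a-2) / (k!^a · a!)`. Divided by `a`, its logarithm is
`(k+1) log m + (log (k a + 1) - log a) + (log a - log a! / a) - log k! + o(1)`,
and the two brackets tend to `log k` and, by Stirling's formula, to `1`;
finally `log k! - log k = log (k-1)!`. -/

open Real Filter Topology
open scoped Nat

lemma tendsto_log_div_self_atTop : Tendsto (fun x : ℝ => log x / x) atTop (𝓝 0) :=
  isLittleO_log_id_atTop.tendsto_div_nhds_zero

lemma tendsto_log_sub_log_factorial_div :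
    Tendsto (fun n : ℕ => log n - log n ! / n) atTop (𝓝 1) := by
  have hlogSeq : Tendsto (fun n : ℕ => log (Stirling.stirlingSeq n) * (1 / n)) atTop (𝓝 0) := by
    simpa using ((continuousAt_log (sqrt_pos.2 pi_pos).ne').tendsto.comp
      Stirling.tendsto_stirlingSeq_sqrt_pi).mul tendsto_one_div_atTop_nhds_zero_nat
  have hlogTwo : Tendsto (fun n : ℕ => log (2 * n) / (2 * n)) atTop (𝓝 0) :=
    tendsto_log_div_self_atTop.comp <|
      (tendsto_natCast_atTop_atTop (R := ℝ)).const_mul_atTop two_pos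
  have hlim := (tendsto_const_nhds (x := (1 : ℝ))).sub hlogSeq |>.sub hlogTwo
  rw [sub_zero, sub_zero] at hlim
  refine hlim.congr' ?_
  filter_upwards [eventually_ne_atTop 0] with n hn
  have hn' : (0 : ℝ) < n := by positivity
  have hformula := Stirling.log_stirlingSeq_formula n
  rw [log_div hn'.ne' (exp_ne_zero 1), log_exp] at hformula
  rw [show log n ! = log (Stirling.stirlingSeq n) + 1 / 2 * log (2 * n) + n * (log n - 1) by
    linarith]
  field_simp
  ring

lemma tendsto_log_mul_add_sub_log {c : ℝ} (hc : 0 < c) (d : ℝ) :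
    Tendsto (fun x : ℝ => log (c * x + d) - log x) atTop (𝓝 (log c)) := by
  have hlim : Tendsto (fun x : ℝ => c + d * x⁻¹) atTop (𝓝 c) := by
    simpa using tendsto_inv_atTop_zero.const_mul d |>.const_add c
  refine ((continuousAt_log hc.ne').tendsto.comp hlim).congr' ?_
  filter_upwards [eventually_gt_atTop 0, eventually_gt_atTop (-d / c)] with x hx hxd
  have hpos : 0 < c * x + d := by
    rw [div_lt_iff₀ hc] at hxd
    linarith
  rw [Function.comp_apply, ← log_div hpos.ne' hx.ne']
  congr 1
  field_simp

lemma tendsto_log_mul_add_div {c : ℝ} (hc : 0 < c) (d : ℝ) :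
    Tendsto (fun x : ℝ => log (c * x + d) / x) atTop (𝓝 0) := by
  have hlim := ((tendsto_log_mul_add_sub_log hc d).mul tendsto_inv_atTop_zero).add
    tendsto_log_div_self_atTop
  rw [mul_zero, add_zero] at hlim
  refine hlim.congr' ?_
  filter_upwards [eventually_ne_atTop 0] with x hx
  field_simp
  ring

lemma log_factorial_eq_log_add_log_factorial_pred {k : ℕ} (hk : k ≠ 0) :
    log (k ! : ℝ) = log k + log ((k - 1)! : ℝ) := by
  rw [← Nat.mul_factorial_pred hk, Nat.cast_mul,
    log_mul (by exact_mod_cast hk) (by positivity)]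

lemma log_eulerChar_ratio {m : ℕ} (hm : m ≠ 0) (k a : ℕ) :
    log ((m : ℝ) ^ ((k + 1) * a) * (((k * a)! : ℝ) / (k * a + 1)) *
        (((k * a + 1 : ℕ) : ℝ) / (k ! : ℝ)) ^ a / ((a ! : ℝ) * ((k * a + 1)! : ℝ))) =
      ((k + 1) * a) * log m + a * log (k * a + 1) - a * log (k ! : ℝ) - log (a ! : ℝ)
        - 2 * log (k * a + 1) := by
  have hc : (0 : ℝ) < k * a + 1 := by positivity
  rw [Nat.factorial_succ]
  push_cast
  rw [log_div (by positivity) (by positivity), log_mul (by positivity) (by positivity),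
    log_mul (by positivity) (by positivity), log_pow, log_div (by positivity) hc.ne', log_pow,
    log_div hc.ne' (by positivity), log_mul (by positivity) (by positivity),
    log_mul hc.ne' (by positivity)]
  push_cast
  ring

open Real Filter in
/-- For positive integers `m, k`, as `a → ∞`,
`(1/a)·ln( m^((k+1)a) · ((ka)!/(ka+1)) · ((ka+1)/k!)^a / (a!·(ka+1)!) )`
tends to `(k+1)·ln m + 1 − ln((k−1)!)`. -/
theorem stmt8 (m k : ℕ) (hm : 0 < m) (hk : 0 < k) :
    Tendsto (fun a : ℕ =>
      (1 / (a : ℝ)) * Real.log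
        ((m : ℝ) ^ ((k + 1) * a) * (((k * a).factorial : ℝ) / (k * a + 1)) *
          (((k * a + 1 : ℕ) : ℝ) / (k.factorial : ℝ)) ^ a /
            ((a.factorial : ℝ) * ((k * a + 1).factorial : ℝ))))
      atTop
      (nhds ((k + 1) * Real.log m + 1 - Real.log ((k - 1).factorial))) := by
  have hk' : (0 : ℝ) < k := by exact_mod_cast hk
  have hcast := tendsto_natCast_atTop_atTop (R := ℝ)
  have hlim := ((((tendsto_const_nhds (x := (k + 1) * log m)).add
    ((tendsto_log_mul_add_sub_log hk' 1).comp hcast)).add tendsto_log_sub_log_factorial_div).sub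
    (tendsto_const_nhds (x := log (k ! : ℝ)))).sub
    (((tendsto_log_mul_add_div hk' 1).comp hcast).const_mul 2)
  convert hlim.congr' ?_ using 2
  · rw [log_factorial_eq_log_add_log_factorial_pred hk.ne']
    ring
  filter_upwards [eventually_ne_atTop 0] with a ha
  have ha' : (a : ℝ) ≠ 0 := by exact_mod_cast ha
  simp only [Function.comp_apply, log_eulerChar_ratio hm.ne' k a]
  field_simp
  ring
end

section
/- The number of partitions p(a) of a positive integer a satisfies p(a) ≤ exp(π√(2a/3)). -/
/-!
Euler's product gives `p(n) xⁿ ≤ ∏_{k ≤ n} (1 - xᵏ)⁻¹` for `0 ≤ x < 1`. Expanding each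
`-log (1 - xᵏ)` as a power series and summing over `k` first,
`∑_{k ≤ n} -log (1 - xᵏ) ≤ ∑ⱼ xʲ / (j (1 - xʲ)) ≤ ∑ⱼ x / (j² (1 - x)) = (π² / 6) · x / (1 - x)`.
With `t = x / (1 - x)` and `x⁻¹ = 1 + 1 / t ≤ exp (1 / t)` this reads
`p(n) ≤ exp (π² t / 6 + n / t)`, and `t = √(6n) / π` makes the exponent `π √(2n / 3)`.
-/

open Finset Real

namespace Nat.Partition

variable {n : ℕ}

lemma mem_Icc_of_mem_parts (p : n.Partition) {k : ℕ} (hk : k ∈ p.parts) : k ∈ Icc 1 n :=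
  mem_Icc.2 ⟨p.parts_pos hk, le_of_mem_parts hk⟩

lemma count_parts_le (p : n.Partition) (k : ℕ) : p.parts.count k ≤ n :=
  calc p.parts.count k ≤ Multiset.card p.parts := Multiset.count_le_card _ _
    _ = Multiset.card p.parts • 1 := (mul_one _).symm
    _ ≤ p.parts.sum := Multiset.card_nsmul_le_sum fun _ hi => p.parts_pos hi
    _ = n := p.parts_sum

lemma sum_Icc_count_parts_mul (p : n.Partition) : ∑ k ∈ Icc 1 n, p.parts.count k * k = n := by
  simpa [toFinsuppAntidiag] using
    (mem_finsuppAntidiag.1 p.toFinsuppAntidiag_mem_finsuppAntidiag).1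

def multiplicities (p : n.Partition) (k : Icc 1 n) : ℕ := p.parts.count (k : ℕ)

lemma multiplicities_injective : Function.Injective (multiplicities (n := n)) := by
  intro p q h
  ext k
  by_cases hk : k ∈ Icc 1 n
  · exact congrFun h ⟨k, hk⟩
  · rw [Multiset.count_eq_zero.2 (mt p.mem_Icc_of_mem_parts hk),
      Multiset.count_eq_zero.2 (mt q.mem_Icc_of_mem_parts hk)]

/-- Each partition contributes the monomial `∏ₖ (xᵏ)^(mult k) = xⁿ` to the expanded product. -/
theorem card_mul_pow_le_prod_geom_sum {R : Type*} [CommSemiring R] [PartialOrder R]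
    [IsOrderedRing R] {x : R} (hx : 0 ≤ x) (n : ℕ) :
    Fintype.card n.Partition * x ^ n ≤ ∏ k ∈ Icc 1 n, ∑ j ∈ range (n + 1), (x ^ k) ^ j := by
  classical
  have hterm (p : n.Partition) : ∏ k : Icc 1 n, (x ^ (k : ℕ)) ^ p.multiplicities k = x ^ n := by
    simp_rw [← pow_mul, prod_pow_eq_pow_sum, multiplicities]
    rw [sum_coe_sort (Icc 1 n) fun k => k * p.parts.count k]
    simp_rw [mul_comm _ (p.parts.count _), sum_Icc_count_parts_mul]
  have hmem (p : n.Partition) :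
      p.multiplicities ∈ Fintype.piFinset fun _ : Icc 1 n => range (n + 1) :=
    Fintype.mem_piFinset.2 fun k => mem_range_succ_iff.2 (p.count_parts_le k)
  rw [← prod_coe_sort, prod_univ_sum]
  calc (Fintype.card n.Partition : R) * x ^ n
      = ∑ p : n.Partition, ∏ k : Icc 1 n, (x ^ (k : ℕ)) ^ p.multiplicities k := by
        rw [sum_congr rfl fun p _ => hterm p, sum_const, Finset.card_univ, nsmul_eq_mul]
    _ = ∑ f ∈ univ.image multiplicities, ∏ k : Icc 1 n, (x ^ (k : ℕ)) ^ f k := by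
        rw [sum_image fun p _ q _ h => multiplicities_injective h]
    _ ≤ _ := sum_le_sum_of_subset_of_nonneg (by simpa [subset_iff] using hmem)
        fun _ _ _ => prod_nonneg fun _ _ => pow_nonneg (pow_nonneg hx _) _

theorem card_mul_pow_le_prod_inv_one_sub_pow {K : Type*} [Field K] [LinearOrder K]
    [IsStrictOrderedRing K] {x : K} (h0 : 0 ≤ x) (h1 : x < 1) (n : ℕ) :
    Fintype.card n.Partition * x ^ n ≤ ∏ k ∈ Icc 1 n, (1 - x ^ k)⁻¹ := by
  refine (card_mul_pow_le_prod_geom_sum h0 n).trans <| prod_le_prod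
    (fun k _ => sum_nonneg fun j _ => pow_nonneg (pow_nonneg h0 k) j) fun k hk => ?_
  have hgeom := geom_sum_Ico_le_of_lt_one (m := 0) (n := n + 1) (pow_nonneg h0 k)
    (pow_lt_one₀ h0 h1 (Nat.one_le_iff_ne_zero.1 (mem_Icc.1 hk).1))
  rwa [← range_eq_Ico, pow_zero, one_div] at hgeom

end Nat.Partition

lemma pow_div_one_sub_pow_le {K : Type*} [Field K] [LinearOrder K] [IsStrictOrderedRing K]
    {x : K} (h0 : 0 ≤ x) (h1 : x < 1) {m : ℕ} (hm : m ≠ 0) :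
    x ^ m / (1 - x ^ m) ≤ x / (m * (1 - x)) := by
  have hgeom : (1 - x) * ∑ i ∈ range m, x ^ i = 1 - x ^ m := mul_neg_geom_sum x m
  have hkey : (m : K) * x ^ m ≤ x * ∑ i ∈ range m, x ^ i := by
    rw [mul_sum]
    calc (m : K) * x ^ m = #(range m) • x ^ m := by simp
      _ ≤ ∑ i ∈ range m, x * x ^ i := card_nsmul_le_sum _ _ _ fun i hi => by
        rw [← pow_succ']
        exact pow_le_pow_of_le_one h0 h1.le (mem_range.1 hi)
  rw [div_le_div_iff₀ (sub_pos.2 (pow_lt_one₀ h0 h1 hm))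
    (mul_pos (Nat.cast_pos.2 (Nat.pos_of_ne_zero hm)) (sub_pos.2 h1)), ← hgeom]
  calc x ^ m * (m * (1 - x)) = (1 - x) * (m * x ^ m) := by ring
    _ ≤ (1 - x) * (x * ∑ i ∈ range m, x ^ i) :=
        mul_le_mul_of_nonneg_left hkey (sub_nonneg.2 h1.le)
    _ = x * ((1 - x) * ∑ i ∈ range m, x ^ i) := by ring

lemma hasSum_one_div_nat_add_one_sq :
    HasSum (fun j : ℕ => 1 / ((j : ℝ) + 1) ^ 2) (π ^ 2 / 6) := by
  simpa using (hasSum_nat_add_iff' 1).2 hasSum_zeta_two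

lemma prod_Icc_inv_one_sub_pow_le_exp {x : ℝ} (h0 : 0 ≤ x) (h1 : x < 1) (n : ℕ) :
    ∏ k ∈ Icc 1 n, (1 - x ^ k)⁻¹ ≤ exp (π ^ 2 / 6 * (x / (1 - x))) := by
  have hpow : ∀ k ∈ Icc 1 n, x ^ k < 1 := fun k hk =>
    pow_lt_one₀ h0 h1 (Nat.one_le_iff_ne_zero.1 (mem_Icc.1 hk).1)
  have hlog : ∀ k ∈ Icc 1 n,
      HasSum (fun j : ℕ => (x ^ k) ^ (j + 1) / (j + 1)) (-log (1 - x ^ k)) := fun k hk =>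
    hasSum_pow_div_log_of_abs_lt_one (by rw [abs_of_nonneg (pow_nonneg h0 k)]; exact hpow k hk)
  have hfactor : ∀ k ∈ Icc 1 n, (1 - x ^ k)⁻¹ = exp (-log (1 - x ^ k)) := fun k hk => by
    rw [exp_neg, exp_log (sub_pos.2 (hpow k hk))]
  have hterm (j : ℕ) : ∑ k ∈ Icc 1 n, (x ^ k) ^ (j + 1) / (j + 1)
      ≤ x / (1 - x) * (1 / ((j : ℝ) + 1) ^ 2) := by
    have hy0 : 0 ≤ x ^ (j + 1) := pow_nonneg h0 _
    have hy1 : x ^ (j + 1) < 1 := pow_lt_one₀ h0 h1 j.succ_ne_zero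
    calc ∑ k ∈ Icc 1 n, (x ^ k) ^ (j + 1) / (j + 1)
        = (∑ k ∈ Ico 1 (n + 1), (x ^ (j + 1)) ^ k) / (j + 1) := by
          simp_rw [Ico_add_one_right_eq_Icc, sum_div, ← pow_mul, mul_comm]
      _ ≤ x ^ (j + 1) / (1 - x ^ (j + 1)) / (j + 1) := by
          gcongr
          simpa using geom_sum_Ico_le_of_lt_one hy0 hy1 (m := 1) (n := n + 1)
      _ ≤ x / ((j + 1 : ℕ) * (1 - x)) / (j + 1) :=
          div_le_div_of_nonneg_right (pow_div_one_sub_pow_le h0 h1 j.succ_ne_zero) (by positivity)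
      _ = x / (1 - x) * (1 / ((j : ℝ) + 1) ^ 2) := by
          push_cast
          field_simp
  rw [prod_congr rfl hfactor, ← exp_sum, exp_le_exp]
  exact (hasSum_le hterm (hasSum_sum hlog) (hasSum_one_div_nat_add_one_sq.mul_left _)).trans_eq
    (mul_comm _ _)

theorem Nat.Partition.card_le_exp (n : ℕ) {t : ℝ} (ht : 0 < t) :
    (Fintype.card n.Partition : ℝ) ≤ exp (π ^ 2 / 6 * t + n / t) := by
  set x := t / (1 + t) with hx
  have hx0 : 0 < x := by positivity
  have hx1 : x < 1 := (div_lt_one (by positivity)).2 (lt_one_add t)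
  have hxt : x / (1 - x) = t := by
    rw [hx]
    field_simp
    ring
  have hbound : Fintype.card n.Partition * x ^ n ≤ exp (π ^ 2 / 6 * t) :=
    calc Fintype.card n.Partition * x ^ n
        ≤ ∏ k ∈ Icc 1 n, (1 - x ^ k)⁻¹ := card_mul_pow_le_prod_inv_one_sub_pow hx0.le hx1 n
      _ ≤ exp (π ^ 2 / 6 * t) := hxt ▸ prod_Icc_inv_one_sub_pow_le_exp hx0.le hx1 n
  have hinv : x⁻¹ ^ n ≤ exp (n / t) := by
    rw [div_eq_mul_one_div, exp_nat_mul]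
    gcongr
    calc x⁻¹ = 1 / t + 1 := by rw [hx]; field_simp
      _ ≤ exp (1 / t) := add_one_le_exp _
  calc (Fintype.card n.Partition : ℝ) = Fintype.card n.Partition * x ^ n * x⁻¹ ^ n := by
        rw [mul_assoc, ← mul_pow, mul_inv_cancel₀ hx0.ne', one_pow, mul_one]
    _ ≤ exp (π ^ 2 / 6 * t) * exp (n / t) := by gcongr
    _ = exp (π ^ 2 / 6 * t + n / t) := (exp_add _ _).symm

open Real in
/-- The number of partitions of a positive integer `a` is at most `exp(π·√(2a/3))`. -/
theorem stmt14 (a : ℕ) (ha : 0 < a) :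
    (Fintype.card (Nat.Partition a) : ℝ) ≤ Real.exp (π * Real.sqrt (2 * a / 3)) := by
  have hsq : √(6 * a) ^ 2 = 6 * a := sq_sqrt (by positivity)
  have hopt : π ^ 2 / 6 * (√(6 * a) / π) + a / (√(6 * a) / π) = π * √(2 * a / 3) := by
    rw [show (2 * a / 3 : ℝ) = (√(6 * a) / 3) ^ 2 by rw [div_pow, hsq]; ring,
      sqrt_sq (by positivity)]
    field_simp
    nlinarith [hsq]
  exact hopt ▸ Nat.Partition.card_le_exp a (by positivity)
end
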